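/- arXiv:1402.1965 — 3 statements merged into one kernel-verified Lean document; each statement's English description precedes it below -/
import Mathlib

section
/- Let e ≥ 1 and let I ⊆ {1, …, e−1} with |I| = i. The number of permutations w of {0,…,e−1} with ascent set {j ∈ {1,…,e−1} : w(j−1) < w(j)} equal to I is the binomial coefficient C(e−1, i) if and only if I = {1,…,i} or I = {e−i, …, e−1}. -/
/-- The ascent set of a permutation of `{0,…,e−1}`: positions `j ≥ 1` with
`w(j−1) < w(j)`. -/
def ascents (e : ℕ) (w : Equiv.Perm (Fin e)) : Finset (Fin e) :=
  Finset.univ.filter fun j =>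
    0 < (j : ℕ) ∧ w ⟨(j : ℕ) - 1, Nat.lt_of_le_of_lt (Nat.sub_le _ _) j.isLt⟩ < w j

namespace AscProof
open Finset
variable {n : ℕ}


/-- value of permutation at natural index, 0 outside range -/
def wv (e : ℕ) (w : Equiv.Perm (Fin e)) (a : ℕ) : ℕ :=
  if h : a < e then ((w ⟨a, h⟩ : Fin e) : ℕ) else 0

def ascN (e : ℕ) (w : Equiv.Perm (Fin e)) : Finset ℕ :=
  (ascents e w).image (fun j : Fin e => (j : ℕ))

lemma mem_ascN {e : ℕ} {w : Equiv.Perm (Fin e)} {j : ℕ} :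
    j ∈ ascN e w ↔ 0 < j ∧ j < e ∧ wv e w (j-1) < wv e w j := by
  simp only [ascN, ascents, Finset.mem_image, Finset.mem_filter, Finset.mem_univ, true_and]
  constructor
  · rintro ⟨j', ⟨h0, hlt⟩, rfl⟩
    refine ⟨h0, j'.isLt, ?_⟩
    rw [wv, wv, dif_pos (Nat.lt_of_le_of_lt (Nat.sub_le _ _) j'.isLt), dif_pos j'.isLt]
    rw [Fin.lt_def] at hlt
    simpa using hlt
  · rintro ⟨h0, hj, hlt⟩
    refine ⟨⟨j, hj⟩, ⟨h0, ?_⟩, rfl⟩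
    rw [wv, wv, dif_pos (Nat.lt_of_le_of_lt (Nat.sub_le _ _) hj), dif_pos hj] at hlt
    exact Fin.lt_def.mpr hlt

lemma ascN_subset {e : ℕ} (w : Equiv.Perm (Fin e)) : ascN e w ⊆ Icc 1 (e-1) := by
  intro j hj
  rw [mem_ascN] at hj
  rw [mem_Icc]
  omega


def ins (p : Fin (n+1)) (v : Equiv.Perm (Fin n)) : Equiv.Perm (Fin (n+1)) :=
  ((finSuccEquiv' p).trans (Equiv.optionCongr v)).trans (finSuccEquiv' (Fin.last n)).symm

lemma ins_apply_self (p : Fin (n+1)) (v : Equiv.Perm (Fin n)) : ins p v p = Fin.last n := by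
  simp [ins, finSuccEquiv'_at, finSuccEquiv'_symm_none]

lemma ins_apply_succAbove (p : Fin (n+1)) (v : Equiv.Perm (Fin n)) (i : Fin n) :
    ins p v (p.succAbove i) = (v i).castSucc := by
  simp [ins, finSuccEquiv'_succAbove, finSuccEquiv'_symm_some, Fin.succAbove_last]

lemma wv_ins (p : Fin (n+1)) (v : Equiv.Perm (Fin n)) (a : ℕ) (ha : a < n+1) :
    wv (n+1) (ins p v) a =
      if a < (p:ℕ) then wv n v a else if a = (p:ℕ) then n else wv n v (a-1) := by
  rcases lt_trichotomy a (p:ℕ) with h | h | h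
  · have han : a < n := lt_of_lt_of_le h (Nat.lt_succ_iff.mp p.isLt)
    have key : (⟨a, ha⟩ : Fin (n+1)) = p.succAbove ⟨a, han⟩ := by
      rw [Fin.succAbove_of_castSucc_lt]
      · rfl
      · exact Fin.lt_def.mpr (by simpa using h)
    rw [wv, dif_pos ha, key, ins_apply_succAbove, if_pos h, wv, dif_pos han]
    simp
  · have key : (⟨a, ha⟩ : Fin (n+1)) = p := Fin.ext h
    rw [wv, dif_pos ha, key, ins_apply_self, if_neg (by omega), if_pos h]
    simp
  · have han : a - 1 < n := by omega
    have key : (⟨a, ha⟩ : Fin (n+1)) = p.succAbove ⟨a-1, han⟩ := by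
      rw [Fin.succAbove_of_le_castSucc]
      · exact Fin.ext (by simp; omega)
      · exact Fin.le_def.mpr (by simp; omega)
    rw [wv, dif_pos ha, key, ins_apply_succAbove, if_neg (by omega), if_neg (by omega),
      wv, dif_pos han]
    simp


def transform (p : ℕ) (T : Finset ℕ) : Finset ℕ :=
  (T.filter (· < p)) ∪ (if 0 < p then {p} else ∅) ∪ ((T.filter (fun t => p+1 ≤ t)).image (·+1))

lemma mem_transform {p j : ℕ} {T : Finset ℕ} :
    j ∈ transform p T ↔ (j ∈ T ∧ j < p) ∨ (j = p ∧ 0 < p) ∨ (p+2 ≤ j ∧ j-1 ∈ T) := by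
  simp only [transform, mem_union, mem_filter, mem_image]
  constructor
  · rintro ((⟨h1,h2⟩ | h) | ⟨t, ⟨ht, hpt⟩, rfl⟩)
    · exact Or.inl ⟨h1, h2⟩
    · split at h
      · simp only [mem_singleton] at h
        exact Or.inr (Or.inl ⟨h, by assumption⟩)
      · simp at h
    · exact Or.inr (Or.inr ⟨by omega, by simpa using ht⟩)
  · rintro (⟨h1,h2⟩ | ⟨rfl, hp⟩ | ⟨h1, h2⟩)
    · exact Or.inl (Or.inl ⟨h1, h2⟩)
    · exact Or.inl (Or.inr (by rw [if_pos hp]; simp))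
    · exact Or.inr ⟨j-1, ⟨h2, by omega⟩, by omega⟩


lemma wv_lt_of_lt {v : Equiv.Perm (Fin n)} {a : ℕ} (h : a < n) : wv n v a < n := by
  rw [wv, dif_pos h]; exact (v ⟨a, h⟩).isLt

lemma wv_le {v : Equiv.Perm (Fin n)} (a : ℕ) : wv n v a = 0 ∨ wv n v a < n := by
  rw [wv]; split
  · exact Or.inr ((v _).isLt)
  · exact Or.inl rfl

lemma ascN_ins (p : Fin (n+1)) (v : Equiv.Perm (Fin n)) :
    ascN (n+1) (ins p v) = transform (p:ℕ) (ascN n v) := by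
  have hp : (p:ℕ) < n + 1 := p.isLt
  ext j
  rw [mem_ascN, mem_transform]
  have hT : ∀ t, t ∈ ascN n v → 0 < t ∧ t < n := fun t ht => by
    rw [mem_ascN] at ht; exact ⟨ht.1, ht.2.1⟩
  by_cases hj : 0 < j ∧ j < n + 1
  · obtain ⟨hj0, hjn⟩ := hj
    rw [wv_ins p v j hjn, wv_ins p v (j-1) (by omega)]
    rcases Nat.lt_trichotomy j (p:ℕ) with h | h | h
    · rw [if_pos (show j-1 < (p:ℕ) by omega), if_pos (show j < (p:ℕ) from h)]
      have hjn' : j < n := by omega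
      constructor
      · intro ⟨_, _, hlt⟩
        exact Or.inl ⟨mem_ascN.mpr ⟨hj0, hjn', hlt⟩, h⟩
      · rintro (⟨ht, _⟩ | ⟨rfl, _⟩ | ⟨h2, _⟩)
        · exact ⟨hj0, hjn, (mem_ascN.mp ht).2.2⟩
        · omega
        · omega
    · rw [if_pos (show j-1 < (p:ℕ) by omega), if_neg (show ¬ j < (p:ℕ) by omega),
        if_pos (show j = (p:ℕ) from h)]
      have hlt : wv n v (j-1) < n := wv_lt_of_lt (by omega)
      constructor
      · intro _; exact Or.inr (Or.inl ⟨h, by omega⟩)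
      · intro _; exact ⟨hj0, hjn, hlt⟩
    · rcases Nat.eq_or_lt_of_le h with h' | h'
      · -- j = p + 1
        rw [if_neg (show ¬ j-1 < (p:ℕ) by omega), if_pos (show j-1 = (p:ℕ) by omega),
          if_neg (show ¬ j < (p:ℕ) by omega), if_neg (show ¬ j = (p:ℕ) by omega)]
        constructor
        · intro ⟨_, _, hlt⟩
          rcases wv_le (v := v) (j-1) with h0 | h0 <;> omega
        · rintro (⟨ht, _⟩ | ⟨_, _⟩ | ⟨_, _⟩)
          · have := hT _ ht; omega
          · omega
          · omega
      · -- j ≥ p + 2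
        rw [if_neg (show ¬ j-1 < (p:ℕ) by omega), if_neg (show ¬ j-1 = (p:ℕ) by omega),
          if_neg (show ¬ j < (p:ℕ) by omega), if_neg (show ¬ j = (p:ℕ) by omega)]
        have e1 : j - 1 - 1 = j - 2 := by omega
        rw [e1]
        constructor
        · intro ⟨_, _, hlt⟩
          refine Or.inr (Or.inr ⟨by omega, mem_ascN.mpr ⟨by omega, by omega, ?_⟩⟩)
          rw [e1]; exact hlt
        · rintro (⟨ht, _⟩ | ⟨rfl, _⟩ | ⟨h2, ht⟩)
          · have := hT _ ht; omega
          · omega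
          · refine ⟨hj0, hjn, ?_⟩
            have hm := mem_ascN.mp ht
            rw [e1] at hm
            exact hm.2.2
  · constructor
    · intro ⟨a, b, _⟩; omega
    · rintro (⟨ht, h2⟩ | ⟨rfl, _⟩ | ⟨h1, ht⟩)
      · have := hT _ ht; omega
      · omega
      · have := hT _ ht; omega

def A (e : ℕ) (S : Finset ℕ) : ℕ :=
  (Finset.univ.filter fun w : Equiv.Perm (Fin e) => ascN e w = S).card

lemma ins_inj (p : Fin (n+1)) : Function.Injective (ins p) := by
  intro v v' h
  ext i
  have := congrArg (· (p.succAbove i)) h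
  simp only [ins_apply_succAbove] at this
  exact congrArg Fin.val (Fin.castSucc_inj.mp this)

lemma ins_surj (p : Fin (n+1)) (w : Equiv.Perm (Fin (n+1))) (hw : w p = Fin.last n) :
    ∃ v, ins p v = w := by
  set E : Option (Fin n) ≃ Option (Fin n) :=
    ((finSuccEquiv' p).symm.trans (w.trans (finSuccEquiv' (Fin.last n)))) with hE
  have hEnone : E none = none := by
    simp [hE, finSuccEquiv'_symm_none, hw, finSuccEquiv'_at]
  refine ⟨E.removeNone, ?_⟩
  apply Equiv.ext
  intro a
  by_cases hap : a = p
  · subst hap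
    rw [ins_apply_self, hw]
  · obtain ⟨i, rfl⟩ := Fin.exists_succAbove_eq hap
    rw [ins_apply_succAbove]
    have hne : w (p.succAbove i) ≠ Fin.last n := by
      intro hcon
      exact (p.succAbove_ne i) (w.injective (hcon.trans hw.symm))
    obtain ⟨z, hz⟩ := Fin.exists_succAbove_eq hne
    have hsome : E (some i) = some z := by
      simp only [hE, Equiv.trans_apply, finSuccEquiv'_symm_some]
      rw [← hz, finSuccEquiv'_succAbove]
    have := Equiv.removeNone_some E ⟨z, hsome⟩
    rw [hsome] at this
    have hrz : E.removeNone i = z := by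
      injection this
    rw [hrz, ← Fin.succAbove_last, hz]

lemma fiber_card (p : Fin (n+1)) (S : Finset ℕ) :
    (Finset.univ.filter fun w : Equiv.Perm (Fin (n+1)) =>
        ascN (n+1) w = S ∧ w.symm (Fin.last n) = p).card
    = (Finset.univ.filter fun v : Equiv.Perm (Fin n) =>
        transform (p:ℕ) (ascN n v) = S).card := by
  symm
  apply Finset.card_bij (fun v _ => ins p v)
  · intro v hv
    simp only [Finset.mem_filter, Finset.mem_univ, true_and] at hv ⊢
    constructor
    · rw [ascN_ins]; exact hv
    · rw [Equiv.symm_apply_eq, ins_apply_self]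
  · intro v1 h1 v2 h2 h
    exact ins_inj p h
  · intro w hw
    simp only [Finset.mem_filter, Finset.mem_univ, true_and] at hw
    obtain ⟨hasc, hsym⟩ := hw
    have hwp : w p = Fin.last n := by
      rw [← hsym]; exact (w.apply_symm_apply _)
    obtain ⟨v, rfl⟩ := ins_surj p w hwp
    refine ⟨v, ?_, rfl⟩
    simp only [Finset.mem_filter, Finset.mem_univ, true_and]
    rw [← ascN_ins]; exact hasc

lemma A_eq_sum (S : Finset ℕ) :
    A (n+1) S = ∑ p : Fin (n+1),
      (Finset.univ.filter fun w : Equiv.Perm (Fin (n+1)) =>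
        ascN (n+1) w = S ∧ w.symm (Fin.last n) = p).card := by
  rw [A]
  rw [Finset.card_eq_sum_card_fiberwise
    (f := fun w : Equiv.Perm (Fin (n+1)) => w.symm (Fin.last n)) (t := Finset.univ)
    (fun x _ => Finset.mem_univ _)]
  apply Finset.sum_congr rfl
  intro p _
  congr 1
  rw [Finset.filter_filter]

def validP (p : ℕ) (S : Finset ℕ) : Prop := (p ∈ S ∨ p = 0) ∧ p+1 ∉ S

instance (p : ℕ) (S : Finset ℕ) : Decidable (validP p S) := by
  unfold validP; infer_instance

def down (p : ℕ) (S : Finset ℕ) : Finset ℕ :=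
  S.filter (· < p) ∪ (S.filter (fun s => p+2 ≤ s)).image (· - 1)

lemma mem_down {p j : ℕ} {S : Finset ℕ} :
    j ∈ down p S ↔ (j ∈ S ∧ j < p) ∨ (p+1 ≤ j ∧ j+1 ∈ S) := by
  simp only [down, Finset.mem_union, Finset.mem_filter, Finset.mem_image]
  constructor
  · rintro (⟨h1, h2⟩ | ⟨s, ⟨hs1, hs2⟩, rfl⟩)
    · exact Or.inl ⟨h1, h2⟩
    · exact Or.inr ⟨by omega, by rwa [show s - 1 + 1 = s by omega]⟩
  · rintro (⟨h1, h2⟩ | ⟨h1, h2⟩)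
    · exact Or.inl ⟨h1, h2⟩
    · exact Or.inr ⟨j+1, ⟨h2, by omega⟩, by omega⟩

lemma notMem_down (p : ℕ) (S : Finset ℕ) : p ∉ down p S := by
  rw [mem_down]; omega

lemma down_subset {p n : ℕ} (hp : p ≤ n) {S : Finset ℕ} (hS : S ⊆ Finset.Icc 1 n) :
    down p S ⊆ Finset.Icc 1 (n-1) := by
  intro j hj
  rw [mem_down] at hj
  rw [Finset.mem_Icc]
  rcases hj with ⟨h1, h2⟩ | ⟨h1, h2⟩
  · have := Finset.mem_Icc.mp (hS h1); omega
  · have := Finset.mem_Icc.mp (hS h2); omega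

lemma transform_eq_iff {p n : ℕ} (hp : p ≤ n) {S T : Finset ℕ}
    (hS : S ⊆ Finset.Icc 1 n) (hT : T ⊆ Finset.Icc 1 (n-1)) :
    transform p T = S ↔ validP p S ∧ T.erase p = down p S := by
  have hSm : ∀ j ∈ S, 1 ≤ j ∧ j ≤ n := fun j hj => Finset.mem_Icc.mp (hS hj)
  have hTm : ∀ j ∈ T, 1 ≤ j ∧ j ≤ n-1 := fun j hj => Finset.mem_Icc.mp (hT hj)
  constructor
  · intro h
    have hmem : ∀ j, ((j ∈ T ∧ j < p) ∨ (j = p ∧ 0 < p) ∨ (p+2 ≤ j ∧ j-1 ∈ T)) ↔ j ∈ S := by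
      intro j; rw [← h, mem_transform]
    have hvalid : validP p S := by
      constructor
      · rcases Nat.eq_zero_or_pos p with h0 | h0
        · exact Or.inr h0
        · exact Or.inl ((hmem p).mp (Or.inr (Or.inl ⟨rfl, h0⟩)))
      · intro hc
        rcases (hmem (p+1)).mpr hc with ⟨_, _⟩ | ⟨_, _⟩ | ⟨_, _⟩ <;> omega
    refine ⟨hvalid, ?_⟩
    ext j
    rw [Finset.mem_erase, mem_down]
    constructor
    · rintro ⟨hjp, hjT⟩
      rcases Nat.lt_or_ge j p with hlt | hge
      · exact Or.inl ⟨(hmem j).mp (Or.inl ⟨hjT, hlt⟩), hlt⟩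
      · have hj1 : p + 1 ≤ j := by omega
        refine Or.inr ⟨hj1, (hmem (j+1)).mp (Or.inr (Or.inr ⟨by omega, by simpa using hjT⟩))⟩
    · rintro (⟨hjS, hjp⟩ | ⟨hj1, hjS⟩)
      · rcases (hmem j).mpr hjS with ⟨h1, _⟩ | ⟨h1, _⟩ | ⟨h1, _⟩ <;> first
          | exact ⟨by omega, h1⟩
          | omega
      · rcases (hmem (j+1)).mpr hjS with ⟨h1, h2⟩ | ⟨h1, h2⟩ | ⟨h1, h2⟩
        · omega
        · omega
        · refine ⟨by omega, by simpa using h2⟩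
  · rintro ⟨⟨hv1, hv2⟩, herase⟩
    have hmemE : ∀ j, (j ∈ T ∧ j ≠ p) ↔ ((j ∈ S ∧ j < p) ∨ (p+1 ≤ j ∧ j+1 ∈ S)) := by
      intro j
      rw [← mem_down, ← herase, Finset.mem_erase, and_comm]
    ext j
    rw [mem_transform]
    constructor
    · rintro (⟨hjT, hjp⟩ | ⟨rfl, hp0⟩ | ⟨hj2, hjT⟩)
      · rcases (hmemE j).mp ⟨hjT, by omega⟩ with ⟨h1, _⟩ | ⟨h1, _⟩
        · exact h1
        · omega
      · rcases hv1 with h | h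
        · exact h
        · omega
      · rcases (hmemE (j-1)).mp ⟨hjT, by omega⟩ with ⟨_, h2⟩ | ⟨h1, h2⟩
        · omega
        · rwa [show j - 1 + 1 = j by omega] at h2
    · intro hjS
      have hj1 : 1 ≤ j := (hSm j hjS).1
      rcases Nat.lt_trichotomy j p with hlt | heq | hgt
      · exact Or.inl ⟨((hmemE j).mpr (Or.inl ⟨hjS, hlt⟩)).1, hlt⟩
      · exact Or.inr (Or.inl ⟨heq, by omega⟩)
      · have hj2 : p + 2 ≤ j := by
          rcases Nat.eq_or_lt_of_le hgt with h | h
          · exact absurd hjS (by rw [show j = p + 1 by omega] at hjS ⊢; exact hv2)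
          · omega
        refine Or.inr (Or.inr ⟨hj2, ?_⟩)
        exact ((hmemE (j-1)).mpr (Or.inr ⟨by omega, by rwa [show j - 1 + 1 = j by omega]⟩)).1

lemma erase_eq_iff {p : ℕ} {D T : Finset ℕ} (hpD : p ∉ D) :
    T.erase p = D ↔ T = D ∨ T = insert p D := by
  constructor
  · intro h
    by_cases hpT : p ∈ T
    · right
      rw [← h, Finset.insert_erase hpT]
    · left
      rw [← h, Finset.erase_eq_of_notMem hpT]
  · rintro (rfl | rfl)
    · exact Finset.erase_eq_of_notMem hpD
    · exact Finset.erase_insert hpD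

lemma count_transform {p : ℕ} (hp : p ≤ n) (S : Finset ℕ) (hS : S ⊆ Finset.Icc 1 n) :
    (Finset.univ.filter fun v : Equiv.Perm (Fin n) => transform p (ascN n v) = S).card
    = if validP p S then
        A n (down p S) + (if p ∈ Finset.Icc 1 (n-1) then A n (insert p (down p S)) else 0)
      else 0 := by
  have hfc : (Finset.univ.filter fun v : Equiv.Perm (Fin n) => transform p (ascN n v) = S)
      = (Finset.univ.filter fun v : Equiv.Perm (Fin n) =>
          validP p S ∧ (ascN n v).erase p = down p S) := by
    apply Finset.filter_congr
    intro v _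
    exact transform_eq_iff hp hS (ascN_subset v)
  rw [hfc]
  by_cases hv : validP p S
  · rw [if_pos hv]
    simp only [hv, true_and]
    by_cases hpI : p ∈ Finset.Icc 1 (n-1)
    · rw [if_pos hpI]
      have hpred : ∀ v : Equiv.Perm (Fin n),
          ((ascN n v).erase p = down p S) ↔
            (ascN n v = down p S ∨ ascN n v = insert p (down p S)) := by
        intro v
        exact erase_eq_iff (notMem_down p S)
      rw [Finset.filter_congr (fun v _ => hpred v), Finset.filter_or]
      rw [Finset.card_union_of_disjoint]
      · rfl
      · rw [Finset.disjoint_filter]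
        intro v _ h1 h2
        have heq : down p S = insert p (down p S) := h1.symm.trans h2
        have : p ∈ down p S := by
          rw [heq]; exact Finset.mem_insert_self _ _
        exact absurd this (notMem_down p S)
    · rw [if_neg hpI, Nat.add_zero]
      have hpred : ∀ v : Equiv.Perm (Fin n),
          ((ascN n v).erase p = down p S) ↔ (ascN n v = down p S) := by
        intro v
        have hpnot : p ∉ ascN n v := by
          intro hc
          exact hpI (ascN_subset v hc)
        rw [Finset.erase_eq_of_notMem hpnot]
      rw [Finset.filter_congr (fun v _ => hpred v)]
      rfl
  · rw [if_neg hv]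
    rw [Finset.filter_false_of_mem (fun v _ => by simp [hv])]
    exact Finset.card_empty

def F (n : ℕ) (S : Finset ℕ) (p : ℕ) : ℕ :=
  if validP p S then
    A n (down p S) + (if p ∈ Finset.Icc 1 (n-1) then A n (insert p (down p S)) else 0)
  else 0

lemma A_succ (S : Finset ℕ) (hS : S ⊆ Finset.Icc 1 n) :
    A (n+1) S = ∑ p ∈ Finset.range (n+1), F n S p := by
  rw [A_eq_sum]
  rw [← Fin.sum_univ_eq_sum_range]
  apply Finset.sum_congr rfl
  intro p _
  rw [fiber_card, count_transform (Nat.lt_succ_iff.mp p.isLt) S hS]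
  rfl

lemma down_eq_image {p : ℕ} {S : Finset ℕ} (hv : p + 1 ∉ S) :
    down p S = (S.erase p).image (fun s => if s < p then s else s - 1) := by
  ext j
  rw [mem_down]
  simp only [Finset.mem_image, Finset.mem_erase]
  constructor
  · rintro (⟨h1, h2⟩ | ⟨h1, h2⟩)
    · exact ⟨j, ⟨by omega, h1⟩, if_pos h2⟩
    · refine ⟨j+1, ⟨by omega, h2⟩, ?_⟩
      rw [if_neg (by omega)]
      omega
  · rintro ⟨s, ⟨hsp, hsS⟩, rfl⟩
    by_cases h : s < p
    · rw [if_pos h]; exact Or.inl ⟨hsS, h⟩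
    · rw [if_neg h]
      have hs2 : p + 2 ≤ s := by
        rcases Nat.lt_or_ge s (p+2) with h' | h'
        · have : s = p + 1 := by omega
          rw [this] at hsS; exact absurd hsS hv
        · exact h'
      exact Or.inr ⟨by omega, by rwa [show s - 1 + 1 = s by omega]⟩

lemma card_down {p : ℕ} {S : Finset ℕ} (hv : p + 1 ∉ S) :
    (down p S).card = (S.erase p).card := by
  rw [down_eq_image hv]
  apply Finset.card_image_of_injOn
  intro a ha b hb hab
  simp only [Finset.mem_coe, Finset.mem_erase] at ha hb
  have ha2 : a < p ∨ p + 2 ≤ a := by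
    rcases Nat.lt_or_ge a p with h | h
    · exact Or.inl h
    · right
      rcases Nat.eq_or_lt_of_le h with h' | h'
      · exact absurd h'.symm ha.1
      · rcases Nat.eq_or_lt_of_le h' with h'' | h''
        · exact absurd (by omega : a = p + 1) (fun hc => hv (hc ▸ ha.2))
        · omega
  have hb2 : b < p ∨ p + 2 ≤ b := by
    rcases Nat.lt_or_ge b p with h | h
    · exact Or.inl h
    · right
      rcases Nat.eq_or_lt_of_le h with h' | h'
      · exact absurd h'.symm hb.1
      · rcases Nat.eq_or_lt_of_le h' with h'' | h''
        · exact absurd (by omega : b = p + 1) (fun hc => hv (hc ▸ hb.2))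
        · omega
  simp only at hab
  rcases ha2 with h1 | h1 <;> rcases hb2 with h2 | h2 <;>
    [skip; skip; skip; skip] <;>
    · first
      | (rw [if_pos h1, if_pos h2] at hab; omega)
      | (rw [if_pos h1, if_neg (by omega)] at hab; omega)
      | (rw [if_neg (by omega), if_pos h2] at hab; omega)
      | (rw [if_neg (by omega), if_neg (by omega)] at hab; omega)

lemma card_down_pos {p : ℕ} {S : Finset ℕ} (hv : validP p S) (hp : 1 ≤ p) :
    (down p S).card + 1 = S.card := by
  have hpS : p ∈ S := by rcases hv.1 with h | h; exact h; omega
  rw [card_down hv.2, Finset.card_erase_of_mem hpS]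
  have : 1 ≤ S.card := Finset.card_pos.mpr ⟨p, hpS⟩
  omega

lemma card_down_zero {S : Finset ℕ} (h0 : 0 ∉ S) (hv : validP 0 S) :
    (down 0 S).card = S.card := by
  rw [card_down hv.2, Finset.erase_eq_of_notMem h0]

lemma down_Icc_init {k : ℕ} (hk : 1 ≤ k) : down k (Finset.Icc 1 k) = Finset.Icc 1 (k-1) := by
  ext j
  rw [mem_down]
  simp only [Finset.mem_Icc]
  omega

lemma insert_Icc_init {k : ℕ} (hk : 1 ≤ k) :
    insert k (Finset.Icc 1 (k-1)) = Finset.Icc 1 k := by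
  ext j
  simp only [Finset.mem_insert, Finset.mem_Icc]
  omega

lemma validP_Icc_init {p k : ℕ} (hk : 1 ≤ k) :
    validP p (Finset.Icc 1 k) ↔ p = k := by
  unfold validP
  simp only [Finset.mem_Icc]
  omega

lemma validP_empty {p : ℕ} : validP p (∅ : Finset ℕ) ↔ p = 0 := by
  unfold validP
  simp only [Finset.notMem_empty, false_or, not_false_iff, and_true]

lemma down_zero_empty : down 0 (∅ : Finset ℕ) = ∅ := by
  ext j; rw [mem_down]; simp

lemma down_Icc_final_zero {N k : ℕ} (hk : 1 ≤ k) (hkN : k + 1 ≤ N) :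
    down 0 (Finset.Icc (N+1-k) N) = Finset.Icc (N-k) (N-1) := by
  ext j
  rw [mem_down]
  simp only [Finset.mem_Icc]
  omega

lemma down_Icc_final_top {N k : ℕ} (hk : 1 ≤ k) (hkN : k + 1 ≤ N) :
    down N (Finset.Icc (N+1-k) N) = Finset.Icc (N+1-k) (N-1) := by
  ext j
  rw [mem_down]
  simp only [Finset.mem_Icc]
  omega

lemma validP_Icc_final {p N k : ℕ} (hk : 1 ≤ k) (hkN : k + 1 ≤ N) :
    validP p (Finset.Icc (N+1-k) N) ↔ p = 0 ∨ p = N := by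
  unfold validP
  simp only [Finset.mem_Icc]
  omega

lemma A_one_empty : A 1 (∅ : Finset ℕ) = 1 := by
  rw [A, Finset.filter_true_of_mem]
  · rw [Finset.card_univ]
    simp
  · intro w _
    apply Finset.eq_empty_iff_forall_notMem.mpr
    intro j hj
    rw [mem_ascN] at hj
    omega

lemma struct {N : ℕ} {S : Finset ℕ} (hS : S ⊆ Finset.Icc 1 N) (hne : S.Nonempty)
    (h1 : S ≠ Finset.Icc 1 S.card) (h2 : S ≠ Finset.Icc (N+1-S.card) N) :
    ∃ p₁ p₂ : ℕ, p₁ ≠ p₂ ∧ validP p₁ S ∧ 1 ≤ p₁ ∧ p₁ ≤ N-1 ∧ validP p₂ S ∧ p₂ ≤ N := by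
  set m := S.min' hne with hm_def
  set M := S.max' hne with hM_def
  have hmS : m ∈ S := S.min'_mem hne
  have hMS : M ∈ S := S.max'_mem hne
  have hm1 : 1 ≤ m := (Finset.mem_Icc.mp (hS hmS)).1
  have hMN : M ≤ N := (Finset.mem_Icc.mp (hS hMS)).2
  have hmM : m ≤ M := S.min'_le _ hMS
  have hMvalid : validP M S := by
    refine ⟨Or.inl hMS, fun hc => ?_⟩
    have := S.le_max' _ hc
    omega
  have hsub : S ⊆ Finset.Icc m M := fun x hx =>
    Finset.mem_Icc.mpr ⟨S.min'_le _ hx, S.le_max' _ hx⟩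
  by_cases hint : S = Finset.Icc m M
  · have hcard : S.card = M + 1 - m := by rw [hint, Nat.card_Icc]
    have hm2 : 2 ≤ m := by
      by_contra hc
      have hme : m = 1 := by omega
      apply h1
      rw [hcard, hme, hint]
      congr 1 <;> omega
    have hM2 : M ≤ N - 1 := by
      by_contra hc
      have hMe : M = N := by omega
      apply h2
      rw [hcard, hMe, hint]
      congr 1 <;> omega
    refine ⟨M, 0, by omega, hMvalid, by omega, hM2, ⟨Or.inr rfl, fun hc => ?_⟩, by omega⟩
    have := S.min'_le _ hc
    omega
  · have hG : ((Finset.Icc m M) \ S).Nonempty := by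
      rw [Finset.sdiff_nonempty]
      intro hc
      exact hint (Finset.Subset.antisymm hsub hc)
    set g := ((Finset.Icc m M) \ S).min' hG with hg_def
    have hgmem : g ∈ (Finset.Icc m M) \ S := Finset.min'_mem _ hG
    rw [Finset.mem_sdiff, Finset.mem_Icc] at hgmem
    obtain ⟨⟨hgm, hgM⟩, hgS⟩ := hgmem
    have hgm' : m < g := by
      rcases Nat.eq_or_lt_of_le hgm with h | h
      · exact absurd (h ▸ hmS) hgS
      · exact h
    have hg1S : g - 1 ∈ S := by
      by_contra hc
      have : g - 1 ∈ (Finset.Icc m M) \ S := by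
        rw [Finset.mem_sdiff, Finset.mem_Icc]
        exact ⟨⟨by omega, by omega⟩, hc⟩
      have := Finset.min'_le _ _ this
      omega
    refine ⟨g - 1, M, by omega, ⟨Or.inl hg1S, ?_⟩, by omega, by omega, hMvalid, hMN⟩
    rw [show g - 1 + 1 = g by omega]
    exact hgS

theorem main : ∀ n : ℕ, ∀ S : Finset ℕ, S ⊆ Finset.Icc 1 n →
    (Nat.choose n S.card ≤ A (n+1) S ∧
      (A (n+1) S = Nat.choose n S.card ↔
        S = Finset.Icc 1 S.card ∨ S = Finset.Icc (n+1-S.card) n)) := by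
  intro n
  induction n with
  | zero =>
    intro S hS
    have hSe : S = ∅ := by
      have : Finset.Icc 1 0 = (∅ : Finset ℕ) := Finset.Icc_eq_empty (by omega)
      rw [this] at hS
      exact Finset.subset_empty.mp hS
    subst hSe
    have h0 : (∅ : Finset ℕ) = Finset.Icc 1 0 := (Finset.Icc_eq_empty (by omega)).symm
    simp only [Finset.card_empty, Nat.choose_zero_right, A_one_empty]
    exact ⟨le_refl 1, ⟨fun _ => Or.inl h0, fun _ => rfl⟩⟩
  | succ n IH =>
    intro S hS
    set k := S.card with hk
    have hkn : k ≤ n + 1 := by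
      rw [hk]
      have h := Finset.card_le_card hS
      rw [Nat.card_Icc] at h
      omega
    have hrec : A (n+2) S = ∑ p ∈ Finset.range (n+2), F (n+1) S p := A_succ S hS
    have hsplit : ∀ k' : ℕ, 1 ≤ k' →
        Nat.choose (n+1) k' = Nat.choose n (k'-1) + Nat.choose n k' := by
      intro k' hk'
      have h2 : (n+1).choose ((k'-1)+1) = n.choose (k'-1) + n.choose ((k'-1)+1) :=
        Nat.choose_succ_succ _ _
      rw [show (k'-1)+1 = k' by omega] at h2
      exact h2
    -- lower bound for a valid middle position
    have hFlow : ∀ p : ℕ, validP p S → 1 ≤ p → p ≤ n →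
        Nat.choose (n+1) k ≤ F (n+1) S p := by
      intro p hv hp1 hpn
      have hD : down p S ⊆ Finset.Icc 1 n := by
        have := down_subset (show p ≤ n + 1 by omega) hS
        simpa using this
      have hcD : (down p S).card + 1 = k := card_down_pos hv hp1
      have hins : insert p (down p S) ⊆ Finset.Icc 1 n :=
        Finset.insert_subset (Finset.mem_Icc.mpr ⟨hp1, hpn⟩) hD
      have hcI : (insert p (down p S)).card = k := by
        rw [Finset.card_insert_of_notMem (notMem_down p S)]
        omega
      have hIH1 := (IH (down p S) hD).1
      have hIH2 := (IH (insert p (down p S)) hins).1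
      rw [F, if_pos hv, if_pos (by simp only [Nat.add_sub_cancel, Finset.mem_Icc]; omega)]
      rw [hsplit k (by omega)]
      apply Nat.add_le_add
      · rw [show (down p S).card = k - 1 by omega] at hIH1
        exact hIH1
      · rw [hcI] at hIH2
        exact hIH2
    -- positivity of any valid position
    have hFpos : ∀ p : ℕ, p ≤ n + 1 → validP p S → 1 ≤ F (n+1) S p := by
      intro p hp hv
      rw [F, if_pos hv]
      have hD : down p S ⊆ Finset.Icc 1 n := by
        have := down_subset (show p ≤ n + 1 from hp) hS
        simpa using this
      have hIH1 := (IH (down p S) hD).1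
      have hc : (down p S).card ≤ n := by
        have h := Finset.card_le_card hD
        rw [Nat.card_Icc] at h
        omega
      have hpos := Nat.choose_pos hc
      omega
    by_cases hSI : S = Finset.Icc 1 k
    · -- initial interval: equality
      have hA : A (n+2) S = Nat.choose (n+1) k := by
        rcases Nat.eq_zero_or_pos k with hk0 | hk1
        · -- k = 0, S = ∅
          have hSe : S = ∅ := Finset.card_eq_zero.mp (by omega)
          rw [hrec, Finset.sum_eq_single_of_mem 0 (Finset.mem_range.mpr (by omega))]
          · rw [F, if_pos (by rw [hSe]; exact validP_empty.mpr rfl),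
              if_neg (by simp only [Nat.add_sub_cancel, Finset.mem_Icc]; omega)]
            rw [hSe, down_zero_empty, Nat.add_zero, hk0, Nat.choose_zero_right]
            have h0 : (∅ : Finset ℕ) = Finset.Icc 1 (0:ℕ) := (Finset.Icc_eq_empty (by omega)).symm
            have := (IH ∅ (by simp)).2.mpr (Or.inl (by simpa using h0))
            simpa using this
          · intro p _ hp0
            rw [F, if_neg]
            rw [hSe, validP_empty]
            exact hp0
        · -- k ≥ 1
          rw [hrec, Finset.sum_eq_single_of_mem k (Finset.mem_range.mpr (by omega))]
          · rw [F, if_pos (by rw [hSI]; exact (validP_Icc_init hk1).mpr rfl)]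
            rw [hSI, down_Icc_init hk1]
            rcases Nat.lt_or_ge k (n+1) with hklt | hkge
            · -- k ≤ n : middle position
              rw [if_pos (by simp only [Nat.add_sub_cancel, Finset.mem_Icc]; omega)]
              rw [insert_Icc_init hk1]
              have hIcc1 : Finset.Icc 1 (k-1) ⊆ Finset.Icc 1 n :=
                Finset.Icc_subset_Icc (le_refl 1) (by omega)
              have hc1 : (Finset.Icc 1 (k-1)).card = k - 1 := by rw [Nat.card_Icc]; omega
              have hA1 : A (n+1) (Finset.Icc 1 (k-1)) = Nat.choose n (k-1) := by
                have := (IH _ hIcc1).2.mpr (Or.inl (by rw [hc1]))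
                rwa [hc1] at this
              have hIcc2 : Finset.Icc 1 k ⊆ Finset.Icc 1 n :=
                Finset.Icc_subset_Icc (le_refl 1) (by omega)
              have hc2 : (Finset.Icc 1 k).card = k := by rw [Nat.card_Icc]; omega
              have hA2 : A (n+1) (Finset.Icc 1 k) = Nat.choose n k := by
                have := (IH _ hIcc2).2.mpr (Or.inl (by rw [hc2]))
                rwa [hc2] at this
              rw [hA1, hA2, hsplit k (by omega)]
            · -- k = n+1
              have hke : k = n + 1 := by omega
              rw [if_neg (by simp only [Nat.add_sub_cancel, Finset.mem_Icc]; omega)]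
              have hIcc1 : Finset.Icc 1 (k-1) ⊆ Finset.Icc 1 n :=
                Finset.Icc_subset_Icc (le_refl 1) (by omega)
              have hc1 : (Finset.Icc 1 (k-1)).card = k - 1 := by rw [Nat.card_Icc]; omega
              have hA1 : A (n+1) (Finset.Icc 1 (k-1)) = Nat.choose n (k-1) := by
                have := (IH _ hIcc1).2.mpr (Or.inl (by rw [hc1]))
                rwa [hc1] at this
              rw [hA1, Nat.add_zero, hke]
              simp [Nat.choose_self]
          · intro p _ hpk
            rw [F, if_neg]
            rw [hSI, validP_Icc_init hk1]
            exact hpk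
      refine ⟨le_of_eq hA.symm, ⟨fun _ => Or.inl hSI, fun _ => hA⟩⟩
    · by_cases hSF : S = Finset.Icc (n+1+1-k) (n+1)
      · -- final interval: equality
        have hk1 : 1 ≤ k := by
          by_contra hc
          have hk0 : k = 0 := by omega
          apply hSI
          have hSe : S = ∅ := Finset.card_eq_zero.mp (by omega)
          rw [hSe, hk0]
          exact (Finset.Icc_eq_empty (by omega)).symm
        have hkn' : k ≤ n := by
          by_contra hc
          have hke : k = n + 1 := by omega
          apply hSI
          rw [hSF, hke]
          congr 1
          omega
        have hval : ∀ p : ℕ, validP p S ↔ p = 0 ∨ p = n + 1 := by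
          intro p
          rw [hSF, show n+1+1-k = (n+1)+1-k from rfl]
          exact validP_Icc_final hk1 (by omega)
        have hA : A (n+2) S = Nat.choose (n+1) k := by
          rw [hrec]
          have hsub2 : ({0, n+1} : Finset ℕ) ⊆ Finset.range (n+2) := by
            intro x hx
            simp only [Finset.mem_insert, Finset.mem_singleton] at hx
            rcases hx with rfl | rfl <;> simp [Finset.mem_range] <;> omega
          rw [← Finset.sum_subset hsub2]
          · rw [Finset.sum_pair (by omega : (0:ℕ) ≠ n+1)]
            -- F 0
            have hF0 : F (n+1) S 0 = Nat.choose n k := by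
              rw [F, if_pos ((hval 0).mpr (Or.inl rfl)),
                if_neg (by simp only [Nat.add_sub_cancel, Finset.mem_Icc]; omega)]
              rw [hSF, Nat.add_zero]
              rw [show (n+1+1-k : ℕ) = (n+1)+1-k from rfl, down_Icc_final_zero hk1 (by omega)]
              have hIcc : Finset.Icc (n+1-k) n ⊆ Finset.Icc 1 n :=
                Finset.Icc_subset_Icc (by omega) (by omega)
              have hc1 : (Finset.Icc (n+1-k) n).card = k := by rw [Nat.card_Icc]; omega
              have := (IH _ hIcc).2.mpr (Or.inr (by rw [hc1]))
              rwa [hc1] at this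
            -- F (n+1)
            have hFn : F (n+1) S (n+1) = Nat.choose n (k-1) := by
              rw [F, if_pos ((hval (n+1)).mpr (Or.inr rfl)),
                if_neg (by simp only [Nat.add_sub_cancel, Finset.mem_Icc]; omega)]
              rw [hSF, Nat.add_zero]
              rw [show (n+1+1-k : ℕ) = (n+1)+1-k from rfl, down_Icc_final_top hk1 (by omega)]
              have hIcc : Finset.Icc (n+1+1-k) n ⊆ Finset.Icc 1 n :=
                Finset.Icc_subset_Icc (by omega) (by omega)
              have hc1 : (Finset.Icc (n+1+1-k) n).card = k - 1 := by rw [Nat.card_Icc]; omega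
              have := (IH _ hIcc).2.mpr (Or.inr (by rw [hc1]; congr 1; omega))
              rwa [hc1] at this
            rw [hF0, hFn, hsplit k (by omega), Nat.add_comm]
          · intro p hp hpn
            simp only [Finset.mem_insert, Finset.mem_singleton] at hpn
            push_neg at hpn
            rw [F, if_neg]
            rw [hval]
            omega
        refine ⟨le_of_eq hA.symm, ⟨fun _ => Or.inr hSF, fun _ => hA⟩⟩
      · -- neither: strict inequality
        have hk1 : 1 ≤ k := by
          by_contra hc
          have hk0 : k = 0 := by omega
          apply hSI
          have hSe : S = ∅ := Finset.card_eq_zero.mp (by omega)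
          rw [hSe, hk0]
          exact (Finset.Icc_eq_empty (by omega)).symm
        have hne : S.Nonempty := Finset.card_pos.mp (by omega)
        obtain ⟨p₁, p₂, h12, hv1, hp11, hp1n, hv2, hp2n⟩ :=
          struct hS hne (by rw [← hk]; exact hSI) (by rw [← hk]; exact hSF)
        have hp1n' : p₁ ≤ n := by simpa using hp1n
        have hstrict : Nat.choose (n+1) k + 1 ≤ A (n+2) S := by
          rw [hrec]
          have hsub2 : ({p₁, p₂} : Finset ℕ) ⊆ Finset.range (n+2) := by
            intro x hx
            simp only [Finset.mem_insert, Finset.mem_singleton] at hx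
            rcases hx with rfl | rfl <;> rw [Finset.mem_range] <;> omega
          calc Nat.choose (n+1) k + 1 ≤ F (n+1) S p₁ + F (n+1) S p₂ :=
                Nat.add_le_add (hFlow p₁ hv1 hp11 hp1n') (hFpos p₂ hp2n hv2)
            _ = ∑ p ∈ ({p₁, p₂} : Finset ℕ), F (n+1) S p := (Finset.sum_pair h12).symm
            _ ≤ ∑ p ∈ Finset.range (n+2), F (n+1) S p :=
                Finset.sum_le_sum_of_subset hsub2
        have hA2 : A (n+1+1) S = A (n+2) S := rfl
        constructor
        · omega
        · constructor
          · intro h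
            omega
          · rintro (h | h)
            · exact absurd h hSI
            · exact absurd h hSF
end AscProof

/-- For `I ⊆ {1,…,e−1}` with `|I| = i`, the number of permutations of `{0,…,e−1}`
with ascent set `I` equals `C(e−1, i)` iff `I = {1,…,i}` or `I = {e−i,…,e−1}`. -/
theorem card_perms_ascent_eq_choose_iff (e i : ℕ) (he : 1 ≤ e)
    (I : Finset ℕ) (hI : I ⊆ Finset.Icc 1 (e - 1)) (hcard : I.card = i) :
    (Finset.univ.filter fun w : Equiv.Perm (Fin e) =>
        (ascents e w).image (fun j : Fin e => (j : ℕ)) = I).card = (e - 1).choose i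
      ↔ I = Finset.Icc 1 i ∨ I = Finset.Icc (e - i) (e - 1) := by
  obtain ⟨n, rfl⟩ : ∃ n, e = n + 1 := ⟨e - 1, by omega⟩
  subst hcard
  have h := (AscProof.main n I (by simpa using hI)).2
  exact h
end

section
/- Let K be a field with a discrete valuation v, ϖ a uniformizer (v(ϖ) = 1), and let P_α ∈ K[X] be an irreducible separable monic polynomial of degree f whose roots a₁, …, a_f in an algebraic closure are units for the extended valuation. Fix e ≥ 1 and suppose that for each i the polynomial X^e − aᵢϖ is irreducible over K(aᵢ). Then the polynomial P(X) = ∏_{i=1}^{f} (X^e − aᵢϖ) lies in K[X] and is irreducible over K. -/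
open Polynomial IntermediateField

set_option maxHeartbeats 10000000 in
set_option synthInstance.maxHeartbeats 10000000 in
/-- Let `Pα ∈ K[X]` be monic, irreducible and separable of degree `f`, whose roots
`a₁, …, a_f` in an (algebraically closed) extension `Ω` are units for a valuation
`v` on `Ω`, where `ϖ ∈ K` is a uniformizer (`v(ϖ) = 1`).  If each `X^e − aᵢϖ` is
irreducible over `K(aᵢ)`, then `P(X) = ∏ᵢ (X^e − aᵢϖ)` has coefficients in `K`
and is irreducible over `K`. -/
theorem prod_X_pow_sub_root_mul_uniformizer_irreducible
    (K : Type*) [Field K] (Ω : Type*) [Field Ω] [Algebra K Ω]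
    (v : AddValuation Ω (WithTop ℤ))
    (ϖ : K) (hϖ : v (algebraMap K Ω ϖ) = 1)
    (f : ℕ) (hf : 1 ≤ f)
    (Pα : Polynomial K) (hmonic : Pα.Monic) (hirr : Irreducible Pα)
    (hsep : Pα.Separable) (hdeg : Pα.natDegree = f)
    (a : Fin f → Ω)
    (hroots : Pα.map (algebraMap K Ω) = ∏ i, (X - C (a i)))
    (hunit : ∀ i, v (a i) = 0)
    (e : ℕ) (he : 1 ≤ e)
    (hfac : ∀ i, Irreducible ((X : Polynomial K⟮a i⟯) ^ e -
      C (IntermediateField.AdjoinSimple.gen K (a i) * algebraMap K K⟮a i⟯ ϖ))) :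
    ∃ Q : Polynomial K, Irreducible Q ∧
      Q.map (algebraMap K Ω) = ∏ i, ((X : Polynomial Ω) ^ e - C (a i * algebraMap K Ω ϖ)) := by
  classical
  have he0 : e ≠ 0 := by omega
  set σ : K →+* Ω := algebraMap K Ω with hσ
  -- the uniformizer is nonzero
  have hϖ0 : ϖ ≠ 0 := by
    rintro rfl
    rw [map_zero, AddValuation.map_zero] at hϖ
    simp at hϖ
  have hσϖ0 : σ ϖ ≠ 0 := fun h => hϖ0 ((_root_.map_eq_zero σ).mp h)
  -- the `a i` are roots of `Pα`
  have haroot : ∀ i, aeval (a i) Pα = 0 := by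
    intro i
    rw [aeval_def, ← eval_map, hroots, eval_prod]
    exact Finset.prod_eq_zero (Finset.mem_univ i) (by simp)
  -- the `a i` are pairwise distinct
  have hainj : Function.Injective a := by
    have h := hsep.map (f := σ)
    rw [hroots] at h
    exact separable_prod_X_sub_C_iff.mp h
  -- the scaled polynomial factors as `∏ (X - C (a i * σ ϖ))` over `Ω`
  have hsR : (Pα.map σ).scaleRoots (σ ϖ) = ∏ i, (X - C (a i * σ ϖ)) := by
    have hminj : Function.Injective fun i => a i * σ ϖ :=
      fun i j hij => hainj (mul_right_cancel₀ hσϖ0 hij)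
    have hdvd : (∏ i, (X - C (a i * σ ϖ))) ∣ (Pα.map σ).scaleRoots (σ ϖ) := by
      apply Finset.prod_dvd_of_coprime
      · exact (Polynomial.pairwise_coprime_X_sub_C hminj).set_pairwise _
      · intro i _
        rw [dvd_iff_isRoot]
        have hroot : aeval (a i) (Pα.map σ) = 0 := by
          rw [coe_aeval_eq_eval, hroots, eval_prod]
          exact Finset.prod_eq_zero (Finset.mem_univ i) (by simp)
        have h0 := scaleRoots_aeval_eq_zero (r := σ ϖ) hroot
        rw [Algebra.algebraMap_self, RingHom.id_apply] at h0
        rw [IsRoot.def, mul_comm, ← coe_aeval_eq_eval]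
        exact h0
    have hdeg1 : ((Pα.map σ).scaleRoots (σ ϖ)).natDegree = f := by
      rw [natDegree_scaleRoots, natDegree_map, hdeg]
    have hdeg2 : (∏ i, (X - C (a i * σ ϖ)) : Polynomial Ω).natDegree = f := by
      rw [natDegree_prod _ _ (fun i _ => X_sub_C_ne_zero _)]
      simp only [natDegree_X_sub_C, Finset.sum_const, Finset.card_univ, Fintype.card_fin,
        smul_eq_mul, mul_one]
    exact eq_of_monic_of_dvd_of_natDegree_le
      (monic_prod_of_monic _ _ fun i _ => monic_X_sub_C _)
      ((monic_scaleRoots_iff _).mpr (hmonic.map σ))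
      hdvd (le_of_eq (hdeg1.trans hdeg2.symm))
  -- the candidate polynomial
  obtain ⟨Q, hQdef⟩ : ∃ Q : Polynomial K, Q = (Pα.scaleRoots ϖ).comp (X ^ e) := ⟨_, rfl⟩
  have hQmonic : Q.Monic := by
    rw [hQdef]
    exact ((monic_scaleRoots_iff ϖ).mpr hmonic).comp (monic_X_pow e) (by simp [he0])
  have hQnd : Q.natDegree = f * e := by
    rw [hQdef, natDegree_comp, natDegree_scaleRoots, hdeg, natDegree_X_pow]
  have hQmap : Q.map σ = ∏ i, ((X : Polynomial Ω) ^ e - C (a i * σ ϖ)) := by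
    rw [hQdef, map_comp, Polynomial.map_pow, map_X,
      map_scaleRoots Pα ϖ σ (by rw [hmonic.leadingCoeff]; simpa using one_ne_zero),
      hsR, prod_comp]
    simp [sub_comp]
  -- the tower `K ⊆ K⟮α⟯ ⊆ (K⟮α⟯)[X]/(g)`
  have i₀ : Fin f := ⟨0, hf⟩
  set α : Ω := a i₀ with hα
  have hmin : minpoly K α = Pα := (minpoly.eq_of_irreducible_of_monic hirr (haroot i₀) hmonic).symm
  have hαint : IsIntegral K α := ⟨Pα, hmonic, by rw [← aeval_def]; exact haroot i₀⟩
  obtain ⟨g, hgdef⟩ : ∃ g : Polynomial K⟮α⟯,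
      g = X ^ e - C (AdjoinSimple.gen K α * algebraMap K K⟮α⟯ ϖ) := ⟨_, rfl⟩
  haveI : Fact (Irreducible g) := ⟨hgdef ▸ hfac i₀⟩
  have hgmonic : g.Monic := hgdef ▸ monic_X_pow_sub_C _ he0
  have hgne : g ≠ 0 := hgmonic.ne_zero
  obtain ⟨β, hβdef⟩ : ∃ β : AdjoinRoot g, β = AdjoinRoot.root g := ⟨_, rfl⟩
  have hβe : β ^ e =
      algebraMap K⟮α⟯ (AdjoinRoot g) (AdjoinSimple.gen K α * algebraMap K K⟮α⟯ ϖ) := by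
    have h0 : aeval β g = 0 := by
      rw [hβdef, aeval_def, AdjoinRoot.algebraMap_eq]
      exact AdjoinRoot.eval₂_root g
    have h1 : aeval β (X ^ e - C (AdjoinSimple.gen K α * algebraMap K K⟮α⟯ ϖ)) = 0 :=
      (congrArg (aeval β) hgdef.symm).trans h0
    rw [map_sub, map_pow, aeval_X, aeval_C, sub_eq_zero] at h1
    exact h1
  have hgen0 : aeval (AdjoinSimple.gen K α) Pα = 0 := by
    have h := minpoly.aeval K (AdjoinSimple.gen K α)
    rwa [minpoly_gen, hmin] at h
  -- β is a root of Q
  have hQβ : aeval β Q = 0 := by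
    rw [hQdef, aeval_comp, map_pow, aeval_X, hβe]
    have h1 : algebraMap K⟮α⟯ (AdjoinRoot g) (AdjoinSimple.gen K α * algebraMap K K⟮α⟯ ϖ)
        = algebraMap K (AdjoinRoot g) ϖ *
          algebraMap K⟮α⟯ (AdjoinRoot g) (AdjoinSimple.gen K α) := by
      rw [map_mul, mul_comm, IsScalarTower.algebraMap_apply K K⟮α⟯ (AdjoinRoot g)]
    rw [h1]
    apply scaleRoots_aeval_eq_zero
    have h2 := Polynomial.aeval_algHom_apply
      (IsScalarTower.toAlgHom K K⟮α⟯ (AdjoinRoot g)) (AdjoinSimple.gen K α) Pα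
    rw [hgen0, map_zero] at h2
    simpa [IsScalarTower.coe_toAlgHom'] using h2
  -- finiteness and ranks
  haveI hLfin : FiniteDimensional K K⟮α⟯ := adjoin.finiteDimensional hαint
  haveI : Module.Finite K⟮α⟯ (AdjoinRoot g) := (AdjoinRoot.powerBasis hgne).finite
  haveI : FiniteDimensional K (AdjoinRoot g) := Module.Finite.trans K⟮α⟯ (AdjoinRoot g)
  have hrankKL : Module.finrank K K⟮α⟯ = f := by rw [adjoin.finrank hαint, hmin, hdeg]
  have hrankLM : Module.finrank K⟮α⟯ (AdjoinRoot g) = e := by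
    rw [(AdjoinRoot.powerBasis hgne).finrank]
    show g.natDegree = e
    rw [hgdef]; exact natDegree_X_pow_sub_C
  have hβint : IsIntegral K β := IsIntegral.of_finite K β
  -- `K⟮β⟯ = ⊤`
  have hϖM : algebraMap K (AdjoinRoot g) ϖ ≠ 0 := fun h => hϖ0 ((_root_.map_eq_zero _).mp h)
  have hgen'mem : algebraMap K⟮α⟯ (AdjoinRoot g) (AdjoinSimple.gen K α) ∈ K⟮β⟯ := by
    have h2 : algebraMap K⟮α⟯ (AdjoinRoot g) (AdjoinSimple.gen K α)
        = β ^ e * algebraMap K (AdjoinRoot g) ϖ⁻¹ := by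
      have h3 : β ^ e = algebraMap K⟮α⟯ (AdjoinRoot g) (AdjoinSimple.gen K α) *
          algebraMap K (AdjoinRoot g) ϖ := by
        rw [hβe, map_mul, IsScalarTower.algebraMap_apply K K⟮α⟯ (AdjoinRoot g)]
      rw [map_inv₀, h3, mul_assoc, mul_inv_cancel₀ hϖM, mul_one]
    rw [h2]
    exact mul_mem (pow_mem (mem_adjoin_simple_self K β) e) (K⟮β⟯.algebraMap_mem _)
  have hgentop : Algebra.adjoin K ({AdjoinSimple.gen K α} : Set K⟮α⟯) = ⊤ :=
    (IntermediateField.adjoin.powerBasis hαint).adjoin_gen_eq_top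
  have hLmem : ∀ x : K⟮α⟯, algebraMap K⟮α⟯ (AdjoinRoot g) x ∈ K⟮β⟯ := by
    intro x
    have hx : x ∈ Algebra.adjoin K ({AdjoinSimple.gen K α} : Set K⟮α⟯) := by
      rw [hgentop]; exact Algebra.mem_top
    refine Algebra.adjoin_induction ?_ ?_ ?_ ?_ hx
    · rintro y rfl
      exact hgen'mem
    · intro r
      rw [← IsScalarTower.algebraMap_apply]
      exact K⟮β⟯.algebraMap_mem _
    · intro y z _ _ ihy ihz
      rw [map_add]; exact add_mem ihy ihz
    · intro y z _ _ ihy ihz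
      rw [map_mul]; exact mul_mem ihy ihz
  have htop : K⟮β⟯ = ⊤ := by
    rw [eq_top_iff]
    rintro x -
    have hx : x ∈ Algebra.adjoin K⟮α⟯ ({β} : Set (AdjoinRoot g)) := by
      rw [hβdef, AdjoinRoot.adjoinRoot_eq_top]; exact Algebra.mem_top
    refine Algebra.adjoin_induction ?_ ?_ ?_ ?_ hx
    · intro y hy
      rw [show y = β from hy]
      exact mem_adjoin_simple_self K β
    · exact fun r => hLmem r
    · exact fun y z _ _ hy hz => add_mem hy hz
    · exact fun y z _ _ hy hz => mul_mem hy hz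
  -- conclude
  have hmindeg : (minpoly K β).natDegree = f * e := by
    rw [← adjoin.finrank hβint, htop, IntermediateField.finrank_top',
      ← Module.finrank_mul_finrank K K⟮α⟯ (AdjoinRoot g), hrankKL, hrankLM]
  have hdvd : minpoly K β ∣ Q := minpoly.dvd K β hQβ
  have hQeq : Q = minpoly K β :=
    eq_of_monic_of_dvd_of_natDegree_le (minpoly.monic hβint) hQmonic hdvd
      (by rw [hQnd, hmindeg])
  exact ⟨Q, hQeq ▸ minpoly.irreducible hβint, hQmap⟩
end

section
/- Let n ≥ 1 and let C = {v ∈ ℤⁿ : v₁ ≥ … ≥ vₙ ≥ 0}. Define H(x,y) = (y + C) ∩ (x − C) for x, y ∈ ℤⁿ. Suppose (z₀, …, z_k) satisfies zᵢ ∈ H(z_{i−1}, z_k) for 1 ≤ i ≤ k, (z_k, …, z_m) satisfies zᵢ ∈ H(z_{i−1}, z_m) for k+1 ≤ i ≤ m, and z_k ∈ H(z₀, z_m). Then (z₀, …, z_m) satisfies zᵢ ∈ H(z_{i−1}, z_m) for all 1 ≤ i ≤ m. -/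
/-- The cone of nonincreasing nonnegative integer vectors. -/
def InCone {n : ℕ} (v : Fin n → ℤ) : Prop :=
  (∀ i j : Fin n, i ≤ j → v j ≤ v i) ∧ ∀ i, 0 ≤ v i

lemma InCone.add' {n : ℕ} {v w : Fin n → ℤ} (hv : InCone v) (hw : InCone w) :
    InCone (v + w) := by
  refine ⟨fun i j hij => ?_, fun i => ?_⟩
  · exact add_le_add (hv.1 i j hij) (hw.1 i j hij)
  · exact add_nonneg (hv.2 i) (hw.2 i)

/-- Concatenation of tense paths: with `H(x,y) = (y + C) ∩ (x − C)`, if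
`(z₀,…,z_k)` is tense towards `z_k`, `(z_k,…,z_m)` is tense towards `z_m`, and
`z_k ∈ H(z₀, z_m)`, then `(z₀,…,z_m)` is tense towards `z_m`. -/
theorem tense_path_concat (n : ℕ) (hn : 1 ≤ n) (k m : ℕ) (hkm : k ≤ m)
    (z : ℕ → Fin n → ℤ)
    (h1 : ∀ i, 1 ≤ i → i ≤ k → InCone (z i - z k) ∧ InCone (z (i - 1) - z i))
    (h2 : ∀ i, k + 1 ≤ i → i ≤ m → InCone (z i - z m) ∧ InCone (z (i - 1) - z i))
    (h3 : InCone (z k - z m) ∧ InCone (z 0 - z k)) :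
    ∀ i, 1 ≤ i → i ≤ m → InCone (z i - z m) ∧ InCone (z (i - 1) - z i) := by
  intro i hi him
  by_cases hik : i ≤ k
  · obtain ⟨ha, hb⟩ := h1 i hi hik
    refine ⟨?_, hb⟩
    have := ha.add' h3.1
    simpa [sub_add_sub_cancel] using this
  · exact h2 i (by omega) him
end
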